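/- arXiv:1705.09815 — 4 statements merged into one kernel-verified Lean document; each statement's English description precedes it below -/
import Mathlib

section
/- Let α > 0 and λ > 0. Then for every t > 0 the function t ↦ t · E_{α,2}(−λ t^α) is differentiable at t with derivative equal to E_{α,1}(−λ t^α). -/
/-!
Termwise, `s · E_{α,2}(c s^α) = ∑ c^k s^{αk+1} / Γ(αk+2)`, and `Γ(β+2) = (β+1) Γ(β+1)` makes the
derivative of the `k`-th term `c^k s^{αk} / Γ(αk+1)`, the `k`-th term of `E_{α,1}(c s^α)`.
Differentiating under the sum is justified on `(0, t+1)`, where these derivatives are dominated by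
the terms of `E_{α,1}(|c| (t+1)^α)`; that series converges because `Γ` eventually beats every
exponential.
-/

/-- The Mittag-Leffler function at a real argument,
`E_{α,μ}(x) = ∑_{k=0}^∞ x^k / Γ(αk + μ)`. -/
noncomputable def mittagLefflerReal (α μ x : ℝ) : ℝ :=
  ∑' k : ℕ, x ^ k / Real.Gamma (α * k + μ)

open Filter Set Real
open scoped Nat

lemma eventually_rpow_le_gamma {W : ℝ} (hW : 1 ≤ W) : ∀ᶠ y in atTop, W ^ y ≤ Gamma y := by
  set c := ⌈W⌉₊
  have hWc : W ≤ c := Nat.le_ceil W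
  obtain ⟨N, hN⟩ := (Nat.eventually_mul_pow_lt_factorial_sub (c ^ 2) c 0).exists_forall_of_atTop
  filter_upwards [eventually_ge_atTop ((N : ℝ) + 2)] with y hy
  set m := ⌊y - 1⌋₊
  have hmN : N ≤ m := Nat.le_floor (by linarith)
  have hm1 : 1 ≤ m := Nat.le_floor (by push_cast; linarith)
  have hm_le : (m : ℝ) + 1 ≤ y := by linarith [Nat.floor_le (by linarith : (0 : ℝ) ≤ y - 1)]
  have hy_lt : y < m + 2 := by linarith [Nat.lt_floor_add_one (y - 1)]
  calc W ^ y ≤ W ^ ((m + 2 : ℕ) : ℝ) := rpow_le_rpow_of_exponent_le hW (by push_cast; linarith)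
    _ ≤ (c : ℝ) ^ (m + 2) := by rw [rpow_natCast]; gcongr
    _ ≤ m ! := by
      have h := hN m hmN
      rw [Nat.sub_zero] at h
      rw [pow_add, mul_comm]
      exact_mod_cast h.le
    _ = Gamma (m + 1) := (Gamma_nat_eq_factorial m).symm
    _ ≤ Gamma y := Gamma_strictMonoOn_Ici.monotoneOn
      (mem_Ici.2 (by exact_mod_cast Nat.succ_le_succ hm1)) (mem_Ici.2 (by linarith)) hm_le

lemma eventually_pow_le_gamma_mul_add {α : ℝ} (hα : 0 < α) {μ : ℝ} (hμ : 0 ≤ μ) (Z : ℝ) :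
    ∀ᶠ k : ℕ in atTop, Z ^ k ≤ Gamma (α * k + μ) := by
  set W := max 1 (|Z| ^ α⁻¹)
  have hlin : Tendsto (fun k : ℕ => α * k + μ) atTop atTop :=
    tendsto_atTop_add_const_right _ _ (tendsto_natCast_atTop_atTop.const_mul_atTop hα)
  filter_upwards [hlin.eventually (eventually_rpow_le_gamma (le_max_left 1 (|Z| ^ α⁻¹)))]
    with k hk
  calc Z ^ k ≤ |Z| ^ k := (le_abs_self _).trans (abs_pow Z k).le
    _ = (|Z| ^ α⁻¹) ^ (α * k) := by
      rw [← rpow_mul (abs_nonneg Z), inv_mul_cancel_left₀ hα.ne', rpow_natCast]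
    _ ≤ W ^ (α * k) := by gcongr; exact le_max_right _ _
    _ ≤ W ^ (α * k + μ) := rpow_le_rpow_of_exponent_le (le_max_left _ _) (by linarith)
    _ ≤ Gamma (α * k + μ) := hk

lemma summable_pow_div_gamma_mul_add {α : ℝ} (hα : 0 < α) {μ : ℝ} (hμ : 0 ≤ μ) (x : ℝ) :
    Summable fun k : ℕ => x ^ k / Gamma (α * k + μ) := by
  refine .of_norm_bounded_eventually_nat summable_geometric_two ?_
  have hZ : 0 < 2 * |x| + 1 := by positivity
  filter_upwards [eventually_pow_le_gamma_mul_add hα hμ (2 * |x| + 1)] with k hk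
  have hΓ : 0 < Gamma (α * k + μ) := (pow_pos hZ k).trans_le hk
  calc ‖x ^ k / Gamma (α * k + μ)‖ = |x| ^ k / Gamma (α * k + μ) := by
        rw [norm_div, norm_pow, Real.norm_eq_abs, Real.norm_of_nonneg hΓ.le]
    _ ≤ |x| ^ k / (2 * |x| + 1) ^ k := by gcongr
    _ = (|x| / (2 * |x| + 1)) ^ k := (div_pow _ _ _).symm
    _ ≤ (1 / 2) ^ k := by
      refine pow_le_pow_left₀ (by positivity) ?_ k
      rw [div_le_iff₀ hZ]
      linarith [abs_nonneg x]

lemma hasDerivAt_rpow_add_one_div_gamma {β s : ℝ} (hs : s ≠ 0) (hβ : β + 1 ≠ 0) :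
    HasDerivAt (fun z => z ^ (β + 1) / Gamma (β + 2)) (s ^ β / Gamma (β + 1)) s := by
  refine ((hasDerivAt_rpow_const (Or.inl hs)).div_const (Gamma (β + 2))).congr_deriv ?_
  rw [show β + 2 = β + 1 + 1 by ring, Gamma_add_one hβ, add_sub_cancel_right,
    mul_div_mul_left _ _ hβ]

lemma mittagLefflerReal_mul_rpow (α μ c : ℝ) {s : ℝ} (hs : 0 ≤ s) :
    mittagLefflerReal α μ (c * s ^ α) = ∑' k : ℕ, c ^ k * s ^ (α * k) / Gamma (α * k + μ) := by
  unfold mittagLefflerReal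
  congr! 2 with k
  rw [mul_pow, rpow_mul_natCast hs]

lemma norm_pow_mul_rpow_div_gamma_le {α : ℝ} (hα : 0 ≤ α) (c : ℝ) {s R : ℝ} (hs : 0 ≤ s)
    (hsR : s ≤ R) (k : ℕ) :
    ‖c ^ k * s ^ (α * k) / Gamma (α * k + 1)‖ ≤ (|c| * R ^ α) ^ k / Gamma (α * k + 1) := by
  have hΓ : 0 < Gamma (α * k + 1) := Gamma_pos_of_pos (by positivity)
  rw [norm_div, norm_mul, norm_pow, Real.norm_eq_abs, Real.norm_of_nonneg (rpow_nonneg hs _),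
    Real.norm_of_nonneg hΓ.le, mul_pow, ← rpow_mul_natCast (hs.trans hsR)]
  gcongr

lemma hasDerivAt_tsum_rpow_add_one_div_gamma {α : ℝ} (hα : 0 < α) (c : ℝ) {t : ℝ} (ht : 0 < t) :
    HasDerivAt (fun s => ∑' k : ℕ, c ^ k * s ^ (α * k + 1) / Gamma (α * k + 2))
      (∑' k : ℕ, c ^ k * t ^ (α * k) / Gamma (α * k + 1)) t := by
  have ht_mem : t ∈ Ioo 0 (t + 1) := ⟨ht, by linarith⟩
  have hsum : Summable fun k : ℕ => c ^ k * t ^ (α * k + 1) / Gamma (α * k + 2) := by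
    refine ((summable_pow_div_gamma_mul_add hα zero_le_two (c * t ^ α)).mul_left t).congr
      fun k => ?_
    rw [mul_pow, ← rpow_mul_natCast ht.le, rpow_add_one ht.ne']
    ring
  refine hasDerivAt_tsum_of_isPreconnected
    (g := fun (k : ℕ) s => c ^ k * s ^ (α * k + 1) / Gamma (α * k + 2))
    (g' := fun (k : ℕ) s => c ^ k * s ^ (α * k) / Gamma (α * k + 1))
    (summable_pow_div_gamma_mul_add hα zero_le_one (|c| * (t + 1) ^ α)) isOpen_Ioo
    isPreconnected_Ioo (fun k s hs => ?_) (fun k s hs => ?_) ht_mem hsum ht_mem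
  · simpa only [mul_div_assoc] using
      (hasDerivAt_rpow_add_one_div_gamma hs.1.ne' (by positivity)).const_mul (c ^ k)
  · exact norm_pow_mul_rpow_div_gamma_le hα.le c hs.1.le hs.2.le k

theorem mittagLeffler_two_hasDerivAt_general (α lam : ℝ) (hα : 0 < α)
    (t : ℝ) (ht : 0 < t) :
    HasDerivAt (fun s : ℝ => s * mittagLefflerReal α 2 (-(lam * s ^ α)))
      (mittagLefflerReal α 1 (-(lam * t ^ α))) t := by
  rw [← neg_mul, mittagLefflerReal_mul_rpow _ _ _ ht.le]
  refine (hasDerivAt_tsum_rpow_add_one_div_gamma hα (-lam) ht).congr_of_eventuallyEq ?_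
  filter_upwards [Ioi_mem_nhds ht] with s hs
  rw [← neg_mul, mittagLefflerReal_mul_rpow _ _ _ hs.le, ← tsum_mul_left]
  exact tsum_congr fun k => by rw [rpow_add_one hs.ne']; ring

/-- Let `α > 0` and `λ > 0`. Then for every `t > 0` the function
`t ↦ t · E_{α,2}(−λ t^α)` is differentiable at `t` with derivative `E_{α,1}(−λ t^α)`. -/
theorem mittagLeffler_two_hasDerivAt (α lam : ℝ) (hα : 0 < α) (hlam : 0 < lam)
    (t : ℝ) (ht : 0 < t) :
    HasDerivAt (fun s : ℝ => s * mittagLefflerReal α 2 (-(lam * s ^ α)))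
      (mittagLefflerReal α 1 (-(lam * t ^ α))) t :=
  mittagLeffler_two_hasDerivAt_general α lam hα t ht
end

section
/- Let 0 < α < 1 and λ > 0, and set e(r) = E_{α,1}(−λ r^α) for r ≥ 0. Then e is differentiable on (0, ∞), for every t > 0 the function r ↦ (t − r)^{−α} e'(r) is integrable on (0, t), and the Caputo derivative of e of order α satisfies (1/Γ(1−α)) ∫_0^t (t − r)^{−α} e'(r) dr = −λ E_{α,1}(−λ t^α) for all t > 0. -/
/-!
Differentiating term by term gives `d/ds E_{α,1}(c s^α) = c s^{α-1} E_{α,α}(c s^α)`, so the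
Caputo integral is the Riemann–Liouville integral `∫_0^t (t-r)^{γ-1} r^{β-1} E_{α,β}(c r^α) dr`
with `β = α`, `γ = 1 - α`, `c = -λ`. Expanding `E_{α,β}` and integrating term by term with
Euler's Beta integral `∫_0^t r^{a-1} (t-r)^{b-1} dr = t^{a+b-1} Γ(a) Γ(b) / Γ(a+b)`, the factors
`Γ(αk+β)` cancel and the integral equals `Γ(γ) t^{β+γ-1} E_{α,β+γ}(c t^α)`, which is
`Γ(1-α) E_{α,1}(-λ t^α)` here. All interchanges of sums with derivatives and integrals rest on
`1/Γ(z) ≤ e^c c^{2-z}` for `c ≥ 1`, `z ≥ 2`, which makes every series involved converge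
geometrically.
-/

open MeasureTheory

open Real Filter Set
open scoped Nat

lemma Real.inv_Gamma_le_exp_mul_rpow {c z : ℝ} (hc : 1 ≤ c) (hz : 2 ≤ z) :
    (Gamma z)⁻¹ ≤ exp c * c ^ (2 - z) := by
  have hfloor : 2 ≤ ⌊z⌋₊ := Nat.le_floor (by exact_mod_cast hz)
  set m := ⌊z⌋₊ - 1
  have hm : (m : ℝ) + 1 = ⌊z⌋₊ := by norm_cast; omega
  have hm2 : (2 : ℝ) ≤ m + 1 := by rw [hm]; exact_mod_cast hfloor
  have hmz : z - 2 ≤ m := by linarith [Nat.lt_floor_add_one z]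
  have hfac : (m ! : ℝ) ≤ Gamma z := by
    rw [← Gamma_nat_eq_factorial]
    exact Gamma_strictMonoOn_Ici.monotoneOn hm2 hz (hm ▸ Nat.floor_le (by linarith))
  have hexp : c ^ m / m ! ≤ exp c := pow_div_factorial_le_exp c (by linarith) m
  calc (Gamma z)⁻¹ ≤ (m ! : ℝ)⁻¹ := inv_anti₀ (by positivity) hfac
    _ ≤ exp c / c ^ m := by
      rw [le_div_iff₀ (by positivity), ← div_eq_inv_mul]
      exact hexp
    _ ≤ exp c * c ^ (2 - z) := by
      rw [div_eq_mul_inv, ← rpow_natCast, ← rpow_neg (by linarith)]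
      gcongr
      linarith

lemma summable_pow_div_Gamma {α : ℝ} (hα : 0 < α) (μ x : ℝ) :
    Summable fun k : ℕ ↦ x ^ k / Gamma (α * k + μ) := by
  set c := (|x| + 1) ^ α⁻¹
  have hc : 1 ≤ c := one_le_rpow (by linarith [abs_nonneg x]) (by positivity)
  have hcα : c ^ α = |x| + 1 := by
    rw [← rpow_mul (by positivity), inv_mul_cancel₀ hα.ne', rpow_one]
  have hρ : |x| / (|x| + 1) < 1 := (div_lt_one (by positivity)).2 (by linarith)
  have hlarge : ∀ᶠ k : ℕ in atTop, 2 ≤ α * k + μ :=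
    (tendsto_atTop_add_const_right _ μ
      (tendsto_natCast_atTop_atTop.const_mul_atTop hα)).eventually_ge_atTop 2
  refine .of_norm_bounded_eventually_nat
    ((summable_geometric_of_lt_one (by positivity) hρ).mul_left (exp c * c ^ (2 - μ))) ?_
  filter_upwards [hlarge] with k hk
  have hG : 0 < Gamma (α * k + μ) := Gamma_pos_of_pos (by linarith)
  calc ‖x ^ k / Gamma (α * k + μ)‖ = |x| ^ k * (Gamma (α * k + μ))⁻¹ := by
        rw [norm_div, norm_pow, Real.norm_eq_abs, Real.norm_of_nonneg hG.le, div_eq_mul_inv]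
    _ ≤ |x| ^ k * (exp c * c ^ (2 - (α * k + μ))) := by
      gcongr
      exact inv_Gamma_le_exp_mul_rpow hc hk
    _ = exp c * c ^ (2 - μ) * (|x| / (|x| + 1)) ^ k := by
      rw [show 2 - (α * k + μ) = (2 - μ) - α * k by ring, rpow_sub (by positivity),
        rpow_mul (by positivity), hcα, rpow_natCast, div_pow]
      ring

lemma Real.integral_rpow_mul_one_sub_rpow {u v : ℝ} (hu : 0 < u) (hv : 0 < v) :
    ∫ x in (0 : ℝ)..1, x ^ (u - 1) * (1 - x) ^ (v - 1) = Gamma u * Gamma v / Gamma (u + v) := by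
  have hbeta := Complex.Gamma_mul_Gamma_eq_betaIntegral (s := u) (t := v)
    (by simpa using hu) (by simpa using hv)
  have hre : Complex.betaIntegral u v =
      ↑(∫ x in (0 : ℝ)..1, x ^ (u - 1) * (1 - x) ^ (v - 1)) := by
    rw [Complex.betaIntegral, ← intervalIntegral.integral_ofReal]
    refine intervalIntegral.integral_congr fun x hx ↦ ?_
    rw [uIcc_of_le zero_le_one] at hx
    simp only [Complex.ofReal_mul, Complex.ofReal_cpow hx.1,
      Complex.ofReal_cpow (sub_nonneg.2 hx.2)]
    push_cast
    rfl
  rw [hre, Complex.Gamma_ofReal, Complex.Gamma_ofReal, ← Complex.ofReal_add, Complex.Gamma_ofReal]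
    at hbeta
  rw [eq_div_iff (Gamma_pos_of_pos (by linarith)).ne']
  exact_mod_cast (hbeta.trans (mul_comm _ _)).symm

lemma Real.integral_Ioo_rpow_mul_sub_rpow {u v t : ℝ} (hu : 0 < u) (hv : 0 < v) (ht : 0 < t) :
    ∫ r in Ioo 0 t, r ^ (u - 1) * (t - r) ^ (v - 1) =
      t ^ (u + v - 1) * (Gamma u * Gamma v / Gamma (u + v)) := by
  rw [← integral_Ioc_eq_integral_Ioo, ← intervalIntegral.integral_of_le ht.le,
    ← integral_rpow_mul_one_sub_rpow hu hv]
  have hscale := intervalIntegral.integral_comp_mul_left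
    (fun r ↦ r ^ (u - 1) * (t - r) ^ (v - 1)) ht.ne' (a := 0) (b := 1)
  simp only [mul_zero, mul_one, smul_eq_mul] at hscale
  rw [eq_inv_mul_iff_mul_eq₀ ht.ne'] at hscale
  rw [← hscale, ← intervalIntegral.integral_const_mul, ← intervalIntegral.integral_const_mul]
  refine intervalIntegral.integral_congr fun x hx ↦ ?_
  rw [uIcc_of_le zero_le_one] at hx
  rw [mul_rpow ht.le hx.1, show t - t * x = t * (1 - x) by ring,
    mul_rpow ht.le (by linarith [hx.2]), show u + v - 1 = 1 + (u - 1) + (v - 1) by ring,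
    rpow_add ht, rpow_add ht, rpow_one]
  ring

/-- A non-integrable function has Bochner integral `0`, so the positive value of the integral
already forces integrability. -/
lemma Real.integrableOn_Ioo_rpow_mul_sub_rpow {u v t : ℝ} (hu : 0 < u) (hv : 0 < v) (ht : 0 < t) :
    IntegrableOn (fun r ↦ r ^ (u - 1) * (t - r) ^ (v - 1)) (Ioo 0 t) := by
  refine Integrable.of_integral_ne_zero ?_
  rw [integral_Ioo_rpow_mul_sub_rpow hu hv ht]
  have := Gamma_pos_of_pos hu
  have := Gamma_pos_of_pos hv
  have := Gamma_pos_of_pos (add_pos hu hv)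
  positivity

lemma Real.Gamma_mul_succ_add_one {α : ℝ} (hα : 0 < α) (k : ℕ) :
    Gamma (α * ↑(k + 1) + 1) = α * (k + 1) * Gamma (α * k + α) := by
  rw [Gamma_add_one (by positivity)]
  push_cast
  ring_nf

lemma hasDerivAt_mittagLefflerReal_one {α : ℝ} (hα : 0 < α) (x : ℝ) :
    HasDerivAt (mittagLefflerReal α 1) (mittagLefflerReal α α x / α) x := by
  have hshift : mittagLefflerReal α 1 =
      fun y ↦ 1 + ∑' k : ℕ, y ^ (k + 1) / Gamma (α * ↑(k + 1) + 1) := by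
    ext y
    rw [mittagLefflerReal, (summable_pow_div_Gamma hα 1 y).tsum_eq_zero_add]
    simp
  have hterm : ∀ (k : ℕ) (y : ℝ),
      HasDerivAt (fun y ↦ y ^ (k + 1) / Gamma (α * ↑(k + 1) + 1))
      (y ^ k / Gamma (α * k + α) / α) y := by
    intro k y
    refine ((hasDerivAt_pow (k + 1) y).div_const _).congr_deriv ?_
    have := Gamma_pos_of_pos (by positivity : 0 < α * k + α)
    rw [Gamma_mul_succ_add_one hα, add_tsub_cancel_right]
    field_simp
    push_cast
    ring
  set R := |x| + 1
  have hbound : ∀ (k : ℕ), ∀ y ∈ Metric.ball 0 R,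
      ‖y ^ k / Gamma (α * k + α) / α‖ ≤ R ^ k / Gamma (α * k + α) / α := by
    intro k y hy
    have := Gamma_pos_of_pos (by positivity : 0 < α * k + α)
    rw [mem_ball_zero_iff] at hy
    rw [norm_div, norm_div, norm_pow, Real.norm_of_nonneg this.le, Real.norm_of_nonneg hα.le]
    gcongr
  have hx : x ∈ Metric.ball 0 R := by rw [mem_ball_zero_iff]; simp [R]
  have := hasDerivAt_tsum_of_isPreconnected ((summable_pow_div_Gamma hα α R).div_const α)
    Metric.isOpen_ball (convex_ball 0 R).isPreconnected (fun k y _ ↦ hterm k y) hbound hx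
    ((summable_nat_add_iff 1).2 (summable_pow_div_Gamma hα 1 x)) hx
  rw [hshift, mittagLefflerReal, ← tsum_div_const]
  exact this.const_add 1

lemma hasDerivAt_mittagLefflerReal_one_mul_rpow {α : ℝ} (hα : 0 < α) (c : ℝ) {s : ℝ}
    (hs : 0 < s) :
    HasDerivAt (fun s ↦ mittagLefflerReal α 1 (c * s ^ α))
      (c * (s ^ (α - 1) * mittagLefflerReal α α (c * s ^ α))) s := by
  refine ((hasDerivAt_mittagLefflerReal_one hα _).comp s
    ((hasDerivAt_rpow_const (p := α) (Or.inl hs.ne')).const_mul c)).congr_deriv ?_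
  field_simp

theorem MeasureTheory.integrable_tsum_of_summable_integral_norm {X E ι : Type*}
    [MeasurableSpace X] {μ : Measure X} [NormedAddCommGroup E] [CompleteSpace E] [Countable ι]
    {F : ι → X → E} (hF_int : ∀ i, Integrable (F i) μ)
    (hF_sum : Summable fun i ↦ ∫ a, ‖F i a‖ ∂μ) :
    Integrable (fun a ↦ ∑' i, F i a) μ := by
  set f : ι → X →₁[μ] E := fun i ↦ (hF_int i).toL1 (F i)
  have hf : ∑' i, ‖f i‖ₑ ≠ ⊤ := by
    simp only [f, ← ofReal_norm, L1.norm_of_fun_eq_integral_norm]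
    rw [← ENNReal.ofReal_tsum_of_nonneg (fun _ ↦ integral_nonneg fun _ ↦ norm_nonneg _) hF_sum]
    exact ENNReal.ofReal_ne_top
  have hcoe : ∀ᵐ a ∂μ, ∀ i, f i a = F i a := ae_all_iff.2 fun i ↦ (hF_int i).coeFn_toL1
  refine (L1.integrable_coeFn (∑' i, f i)).congr ?_
  filter_upwards [Lp.coeFn_tsum hf, hcoe] with a hsum hfi
  simp only [hsum, hfi]

noncomputable def mittagLefflerRLTerm (α β γ c t : ℝ) (k : ℕ) (r : ℝ) : ℝ :=
  c ^ k / Gamma (α * k + β) * (r ^ (α * k + β - 1) * (t - r) ^ (γ - 1))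

section mittagLefflerRLTerm

variable {α β γ t : ℝ}

lemma hasSum_mittagLefflerRLTerm (hα : 0 < α) (c : ℝ) {r : ℝ} (hr : 0 < r) :
    HasSum (fun k ↦ mittagLefflerRLTerm α β γ c t k r)
      ((t - r) ^ (γ - 1) * (r ^ (β - 1) * mittagLefflerReal α β (c * r ^ α))) := by
  have hterm : ∀ k : ℕ, mittagLefflerRLTerm α β γ c t k r =
      (t - r) ^ (γ - 1) * r ^ (β - 1) * ((c * r ^ α) ^ k / Gamma (α * k + β)) := by
    intro k
    rw [mittagLefflerRLTerm, mul_pow, ← rpow_natCast, ← rpow_natCast (r ^ α),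
      ← rpow_mul hr.le, show α * k + β - 1 = (β - 1) + α * k by ring, rpow_add hr]
    ring
  simp only [hterm, mul_assoc]
  exact ((summable_pow_div_Gamma hα β _).hasSum.mul_left _).mul_left _

variable (hα : 0 < α) (hβ : 0 < β) (hγ : 0 < γ) (ht : 0 < t)
include hα hβ hγ ht

lemma integrableOn_mittagLefflerRLTerm (c : ℝ) (k : ℕ) :
    IntegrableOn (mittagLefflerRLTerm α β γ c t k) (Ioo 0 t) :=
  (integrableOn_Ioo_rpow_mul_sub_rpow (by positivity) hγ ht).const_mul _

lemma integral_mittagLefflerRLTerm (c : ℝ) (k : ℕ) :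
    ∫ r in Ioo 0 t, mittagLefflerRLTerm α β γ c t k r =
      Gamma γ * t ^ (β + γ - 1) * ((c * t ^ α) ^ k / Gamma (α * k + (β + γ))) := by
  have hG := Gamma_pos_of_pos (by positivity : 0 < α * k + β)
  simp only [mittagLefflerRLTerm]
  rw [integral_const_mul, integral_Ioo_rpow_mul_sub_rpow (by positivity) hγ ht, mul_pow,
    ← rpow_natCast, ← rpow_natCast (t ^ α), ← rpow_mul ht.le,
    show α * k + β + γ - 1 = (β + γ - 1) + α * k by ring, rpow_add ht, ← add_assoc]
  field_simp

lemma summable_integral_norm_mittagLefflerRLTerm (c : ℝ) :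
    Summable fun k ↦ ∫ r in Ioo 0 t, ‖mittagLefflerRLTerm α β γ c t k r‖ := by
  have hnorm : ∀ k, ∫ r in Ioo 0 t, ‖mittagLefflerRLTerm α β γ c t k r‖ =
      ∫ r in Ioo 0 t, mittagLefflerRLTerm α β γ |c| t k r := by
    intro k
    refine setIntegral_congr_fun measurableSet_Ioo fun r hr ↦ ?_
    have hG := Gamma_pos_of_pos (by positivity : 0 < α * k + β)
    have hr' : 0 ≤ t - r := by linarith [hr.2]
    simp only [mittagLefflerRLTerm, norm_mul, norm_div, norm_pow, Real.norm_eq_abs,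
      abs_of_pos hG, abs_of_nonneg (rpow_nonneg hr.1.le _), abs_of_nonneg (rpow_nonneg hr' _)]
  simp only [hnorm, integral_mittagLefflerRLTerm hα hβ hγ ht]
  exact (summable_pow_div_Gamma hα _ _).mul_left _

end mittagLefflerRLTerm

section RiemannLiouville

variable {α β γ t : ℝ} (hα : 0 < α) (hβ : 0 < β) (hγ : 0 < γ) (ht : 0 < t)
include hα hβ hγ ht

theorem integrableOn_sub_rpow_mul_rpow_mul_mittagLefflerReal (c : ℝ) :
    IntegrableOn
      (fun r ↦ (t - r) ^ (γ - 1) * (r ^ (β - 1) * mittagLefflerReal α β (c * r ^ α))) (Ioo 0 t) :=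
  IntegrableOn.congr_fun
    (integrable_tsum_of_summable_integral_norm (integrableOn_mittagLefflerRLTerm hα hβ hγ ht c)
      (summable_integral_norm_mittagLefflerRLTerm hα hβ hγ ht c))
    (fun _ hr ↦ (hasSum_mittagLefflerRLTerm hα c hr.1).tsum_eq) measurableSet_Ioo

theorem integral_sub_rpow_mul_rpow_mul_mittagLefflerReal (c : ℝ) :
    ∫ r in Ioo 0 t, (t - r) ^ (γ - 1) * (r ^ (β - 1) * mittagLefflerReal α β (c * r ^ α)) =
      Gamma γ * t ^ (β + γ - 1) * mittagLefflerReal α (β + γ) (c * t ^ α) := by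
  rw [setIntegral_congr_fun measurableSet_Ioo
      (fun _ hr ↦ (hasSum_mittagLefflerRLTerm hα c hr.1).tsum_eq.symm),
    ← integral_tsum_of_summable_integral_norm (integrableOn_mittagLefflerRLTerm hα hβ hγ ht c)
      (summable_integral_norm_mittagLefflerRLTerm hα hβ hγ ht c)]
  simp only [integral_mittagLefflerRLTerm hα hβ hγ ht, tsum_mul_left, mittagLefflerReal]

end RiemannLiouville

theorem caputo_mittagLeffler_general (α lam : ℝ) (h0 : 0 < α) (h1 : α < 1) :
    (∀ r : ℝ, 0 < r →
        DifferentiableAt ℝ (fun s : ℝ => mittagLefflerReal α 1 (-(lam * s ^ α))) r) ∧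
    ∀ t : ℝ, 0 < t →
      IntegrableOn
        (fun r : ℝ => (t - r) ^ (-α) *
          deriv (fun s : ℝ => mittagLefflerReal α 1 (-(lam * s ^ α))) r)
        (Set.Ioo 0 t) ∧
      (1 / Real.Gamma (1 - α)) *
          (∫ r in Set.Ioo 0 t, (t - r) ^ (-α) *
            deriv (fun s : ℝ => mittagLefflerReal α 1 (-(lam * s ^ α))) r)
        = -(lam * mittagLefflerReal α 1 (-(lam * t ^ α))) := by
  simp only [← neg_mul]
  have hderiv {r : ℝ} (hr : 0 < r) :=
    hasDerivAt_mittagLefflerReal_one_mul_rpow h0 (-lam) hr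
  refine ⟨fun r hr ↦ (hderiv hr).differentiableAt, fun t ht ↦ ?_⟩
  have hγ : 0 < 1 - α := sub_pos.2 h1
  have hintegrand : EqOn
      (fun r ↦ -lam * ((t - r) ^ ((1 - α) - 1) *
        (r ^ (α - 1) * mittagLefflerReal α α (-lam * r ^ α))))
      (fun r ↦ (t - r) ^ (-α) * deriv (fun s ↦ mittagLefflerReal α 1 (-lam * s ^ α)) r)
      (Ioo 0 t) := fun r hr ↦ by
    simp only [(hderiv hr.1).deriv, sub_sub_cancel_left]
    ring
  refine ⟨IntegrableOn.congr_fun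
    ((integrableOn_sub_rpow_mul_rpow_mul_mittagLefflerReal h0 h0 hγ ht _).const_mul (-lam))
    hintegrand measurableSet_Ioo, ?_⟩
  rw [← setIntegral_congr_fun measurableSet_Ioo hintegrand, integral_const_mul,
    integral_sub_rpow_mul_rpow_mul_mittagLefflerReal h0 h0 hγ ht, add_sub_cancel,
    sub_self, rpow_zero]
  field_simp [(Gamma_pos_of_pos hγ).ne']

/-- Let `0 < α < 1` and `λ > 0`, and set `e(r) = E_{α,1}(−λ r^α)`. Then `e` is
differentiable on `(0,∞)`, for every `t > 0` the function `r ↦ (t−r)^{−α} e'(r)` is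
integrable on `(0,t)`, and the Caputo derivative of `e` of order `α` satisfies
`(1/Γ(1−α)) ∫_0^t (t−r)^{−α} e'(r) dr = −λ E_{α,1}(−λ t^α)` for all `t > 0`. -/
theorem caputo_mittagLeffler (α lam : ℝ) (h0 : 0 < α) (h1 : α < 1) (hlam : 0 < lam) :
    (∀ r : ℝ, 0 < r →
        DifferentiableAt ℝ (fun s : ℝ => mittagLefflerReal α 1 (-(lam * s ^ α))) r) ∧
    ∀ t : ℝ, 0 < t →
      IntegrableOn
        (fun r : ℝ => (t - r) ^ (-α) *
          deriv (fun s : ℝ => mittagLefflerReal α 1 (-(lam * s ^ α))) r)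
        (Set.Ioo 0 t) ∧
      (1 / Real.Gamma (1 - α)) *
          (∫ r in Set.Ioo 0 t, (t - r) ^ (-α) *
            deriv (fun s : ℝ => mittagLefflerReal α 1 (-(lam * s ^ α))) r)
        = -(lam * mittagLefflerReal α 1 (-(lam * t ^ α))) :=
  caputo_mittagLeffler_general α lam h0 h1
end

section
/- Let 0 < α < 2 and let θ satisfy π/2 < θ < min{π, π/α}. Then there exists a constant c > 0, depending only on θ and α, such that for every nonzero complex number z with |arg z| ≤ θ and all real numbers a, b ≥ 0 one has |z^α| · a + b ≤ c · |z^α · a + b|. -/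
/-!
For `w = z ^ α` we have `Re w = ‖w‖ cos (α arg z)`, and `|α arg z| ≤ α θ < π` gives
`Re w ≥ γ ‖w‖` with `γ = cos (α θ) > -1`. Expanding `‖w a + b‖²` and completing the square,
`‖w a + b‖² - (1 + γ)/2 · (‖w‖ a + b)² = (1 - γ)/2 · (‖w‖ a - b)² + 2ab (Re w - γ ‖w‖) ≥ 0`,
so `c = √(2 / (1 + γ))` works.
-/

open Complex

theorem Real.cos_le_cos_of_abs_le {x y : ℝ} (hxy : |x| ≤ y) (hy : y ≤ Real.pi) :
    Real.cos y ≤ Real.cos x := by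
  rw [← Real.cos_abs x]
  exact Real.cos_le_cos_of_nonneg_of_le_pi (abs_nonneg x) hy hxy

namespace Complex

theorem cos_mul_norm_cpow_le_re {z : ℂ} {α θ : ℝ} (hα : 0 ≤ α) (hz : |arg z| ≤ θ)
    (hαθ : α * θ ≤ Real.pi) :
    Real.cos (α * θ) * ‖z ^ (α : ℂ)‖ ≤ (z ^ (α : ℂ)).re := by
  have hcos : Real.cos (α * θ) ≤ Real.cos (arg z * α) := by
    refine Real.cos_le_cos_of_abs_le ?_ hαθ
    rw [abs_mul, abs_of_nonneg hα, mul_comm]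
    exact mul_le_mul_of_nonneg_left hz hα
  rw [cpow_ofReal_re, norm_cpow_real, mul_comm (‖z‖ ^ α)]
  exact mul_le_mul_of_nonneg_right hcos (by positivity)

theorem sq_norm_mul_ofReal_add_ofReal (w : ℂ) (a b : ℝ) :
    ‖w * a + b‖ ^ 2 = ‖w‖ ^ 2 * a ^ 2 + 2 * w.re * a * b + b ^ 2 := by
  rw [Complex.sq_norm, Complex.sq_norm, normSq_apply, normSq_apply]
  simp only [add_re, add_im, mul_re, mul_im, ofReal_re, ofReal_im]
  ring

theorem mul_sq_norm_mul_add_le_sq_norm_mul_ofReal_add_ofReal {w : ℂ} {γ a b : ℝ}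
    (hγ : γ ≤ 1) (hw : γ * ‖w‖ ≤ w.re) (ha : 0 ≤ a) (hb : 0 ≤ b) :
    (1 + γ) / 2 * (‖w‖ * a + b) ^ 2 ≤ ‖w * a + b‖ ^ 2 := by
  have hcross : 2 * (γ * ‖w‖) * a * b ≤ 2 * w.re * a * b := by
    have := mul_le_mul_of_nonneg_right hw (mul_nonneg ha hb)
    linarith
  have hsquare : 0 ≤ (1 - γ) / 2 * (‖w‖ * a - b) ^ 2 :=
    mul_nonneg (by linarith) (sq_nonneg _)
  rw [sq_norm_mul_ofReal_add_ofReal]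
  nlinarith

theorem norm_mul_add_le_sqrt_mul_norm_mul_ofReal_add_ofReal {w : ℂ} {γ a b : ℝ}
    (hγ₁ : -1 < γ) (hγ₂ : γ ≤ 1) (hw : γ * ‖w‖ ≤ w.re) (ha : 0 ≤ a) (hb : 0 ≤ b) :
    ‖w‖ * a + b ≤ √(2 / (1 + γ)) * ‖w * a + b‖ := by
  have hγ : 0 < 1 + γ := by linarith
  rw [← Real.sqrt_sq (norm_nonneg (w * a + b)), ← Real.sqrt_mul (by positivity),
    Real.le_sqrt (by positivity) (by positivity), div_mul_eq_mul_div, le_div_iff₀ hγ]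
  linarith [mul_sq_norm_mul_add_le_sq_norm_mul_ofReal_add_ofReal hγ₂ hw ha hb]

end Complex

theorem sector_coercivity_general (α θ : ℝ) (h0 : 0 < α)
    (hθ1 : Real.pi / 2 < θ) (hθ2 : θ < min Real.pi (Real.pi / α)) :
    ∃ c : ℝ, 0 < c ∧ ∀ z : ℂ, z ≠ 0 → |Complex.arg z| ≤ θ →
      ∀ a b : ℝ, 0 ≤ a → 0 ≤ b →
        ‖z ^ (α : ℂ)‖ * a + b
          ≤ c * ‖z ^ (α : ℂ) * (a : ℂ) + (b : ℂ)‖ := by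
  have hαθ : α * θ < Real.pi :=
    (lt_div_iff₀' h0).mp (hθ2.trans_le (min_le_right _ _))
  have hγ : -1 < Real.cos (α * θ) := by
    have hθ : 0 ≤ θ := by linarith [Real.pi_pos]
    simpa [Real.cos_pi] using
      Real.cos_lt_cos_of_nonneg_of_le_pi (by positivity) le_rfl hαθ
  have hc : 0 < 2 / (1 + Real.cos (α * θ)) := div_pos two_pos (by linarith)
  refine ⟨√(2 / (1 + Real.cos (α * θ))), Real.sqrt_pos.mpr hc, ?_⟩
  intro z _ hz a b ha hb
  exact norm_mul_add_le_sqrt_mul_norm_mul_ofReal_add_ofReal hγ (Real.cos_le_one _)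
    (cos_mul_norm_cpow_le_re h0.le hz hαθ.le) ha hb

/-- Let `0 < α < 2` and `π/2 < θ < min{π, π/α}`.  Then there is `c > 0`, depending only
on `θ` and `α`, such that for every nonzero complex `z` with `|arg z| ≤ θ` and all reals
`a, b ≥ 0` one has `|z^α|·a + b ≤ c·|z^α·a + b|`, with the principal power `z^α`. -/
theorem sector_coercivity (α θ : ℝ) (h0 : 0 < α) (h2 : α < 2)
    (hθ1 : Real.pi / 2 < θ) (hθ2 : θ < min Real.pi (Real.pi / α)) :
    ∃ c : ℝ, 0 < c ∧ ∀ z : ℂ, z ≠ 0 → |Complex.arg z| ≤ θ →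
      ∀ a b : ℝ, 0 ≤ a → 0 ≤ b →
        ‖z ^ (α : ℂ)‖ * a + b
          ≤ c * ‖z ^ (α : ℂ) * (a : ℂ) + (b : ℂ)‖ :=
  sector_coercivity_general α θ h0 hθ1 hθ2
end

section
/- Let 0 < α < 2 and let θ satisfy π/2 < θ < min{π, π/α}. Then there exists a constant c > 0, depending only on θ and α, such that for every nonzero complex number z with |arg z| ≤ θ and every real μ ≥ 0 one has |z^α + μ| ≥ c (|z|^α + μ). In particular |z^α + μ|^{−1} ≤ C |z|^{−α} with C = 1/c, uniformly in μ ≥ 0. -/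
/-!
For `|arg z| ≤ θ` with `αθ < π`, the power `w = z^α` lies in the sector `|arg w| ≤ αθ`.
Adding `μ ≥ 0` to a point of the sector `|arg w| ≤ φ < π` cannot produce cancellation:
`|w + μ|² = |w|² + 2μ Re w + μ² ≥ cos²(φ/2) (|w| + μ)²`, the difference being
`sin²(φ/2) (|w| - μ)²`. So `c = cos(αθ/2)` works.
-/

open Real

theorem cos_half_mul_add_le_norm_add_ofReal {w : ℂ} {φ μ : ℝ} (hφ₀ : 0 ≤ φ) (hφπ : φ ≤ π)
    (hw : ‖w‖ * cos φ ≤ w.re) (hμ : 0 ≤ μ) :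
    cos (φ / 2) * (‖w‖ + μ) ≤ ‖w + μ‖ := by
  have hc : 0 ≤ cos (φ / 2) := cos_nonneg_of_neg_pi_div_two_le_of_le (by linarith) (by linarith)
  have hc_sq : cos (φ / 2) ^ 2 = (1 + cos φ) / 2 := by
    rw [cos_sq, mul_div_cancel₀ _ two_ne_zero]; ring
  have hnorm_sq : ‖w + μ‖ ^ 2 = ‖w‖ ^ 2 + 2 * μ * w.re + μ ^ 2 := by
    simp only [Complex.sq_norm, Complex.normSq_add, Complex.normSq_ofReal, Complex.conj_ofReal,
      Complex.mul_re, Complex.ofReal_re, Complex.ofReal_im, mul_zero, sub_zero]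
    ring
  refine (pow_le_pow_iff_left₀ (by positivity) (norm_nonneg _) two_ne_zero).1 ?_
  rw [mul_pow, hc_sq, hnorm_sq]
  nlinarith [mul_nonneg hμ (sub_nonneg.2 hw), mul_nonneg (sub_nonneg.2 (cos_le_one φ))
    (sq_nonneg (‖w‖ - μ))]

theorem norm_mul_cos_le_cpow_ofReal_re {z : ℂ} {α θ : ℝ} (hα : 0 ≤ α) (hz : |Complex.arg z| ≤ θ)
    (hαθ : α * θ ≤ π) :
    ‖z ^ (α : ℂ)‖ * cos (α * θ) ≤ (z ^ (α : ℂ)).re := by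
  rw [Complex.norm_cpow_real, Complex.cpow_ofReal_re]
  gcongr
  rw [← cos_abs (Complex.arg z * α)]
  refine cos_le_cos_of_nonneg_of_le_pi (abs_nonneg _) hαθ ?_
  rw [abs_mul, abs_of_nonneg hα, mul_comm]
  exact mul_le_mul_of_nonneg_left hz hα

theorem sector_resolvent_bound_general (α θ : ℝ) (h0 : 0 < α)
    (hθ1 : Real.pi / 2 < θ) (hθ2 : θ < min Real.pi (Real.pi / α)) :
    ∃ c : ℝ, 0 < c ∧ ∀ z : ℂ, z ≠ 0 → |Complex.arg z| ≤ θ → ∀ μ : ℝ, 0 ≤ μ →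
      c * (‖z‖ ^ α + μ) ≤ ‖z ^ (α : ℂ) + (μ : ℂ)‖ ∧
      ‖z ^ (α : ℂ) + (μ : ℂ)‖⁻¹ ≤ (1 / c) * ‖z‖ ^ (-α) := by
  have hαθ_pos : 0 < α * θ := mul_pos h0 (by linarith [pi_pos])
  have hαθ_lt : α * θ < π := (lt_div_iff₀' h0).1 (hθ2.trans_le (min_le_right _ _))
  have hc : 0 < cos (α * θ / 2) := cos_pos_of_mem_Ioo ⟨by linarith, by linarith⟩
  refine ⟨cos (α * θ / 2), hc, fun z hz harg μ hμ => ?_⟩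
  have hza : 0 < ‖z‖ ^ α := rpow_pos_of_pos (norm_pos_iff.2 hz) α
  have hbound : cos (α * θ / 2) * (‖z‖ ^ α + μ) ≤ ‖z ^ (α : ℂ) + μ‖ := by
    simpa only [Complex.norm_cpow_real] using
      cos_half_mul_add_le_norm_add_ofReal hαθ_pos.le hαθ_lt.le
        (norm_mul_cos_le_cpow_ofReal_re h0.le harg hαθ_lt.le) hμ
  refine ⟨hbound, ?_⟩
  have hlow : cos (α * θ / 2) * ‖z‖ ^ α ≤ ‖z ^ (α : ℂ) + μ‖ :=
    le_trans (by gcongr; linarith) hbound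
  calc ‖z ^ (α : ℂ) + μ‖⁻¹ ≤ (cos (α * θ / 2) * ‖z‖ ^ α)⁻¹ := inv_anti₀ (by positivity) hlow
    _ = 1 / cos (α * θ / 2) * ‖z‖ ^ (-α) := by rw [rpow_neg (norm_nonneg z), mul_inv, one_div]

/-- Let `0 < α < 2` and `π/2 < θ < min{π, π/α}`.  Then there is `c > 0`, depending only
on `θ` and `α`, such that for every nonzero complex `z` with `|arg z| ≤ θ` and every real
`μ ≥ 0` one has `|z^α + μ| ≥ c (|z|^α + μ)`, with the principal power `z^α`.  In
particular `|z^α + μ|⁻¹ ≤ C |z|^{−α}` with `C = 1/c`, uniformly in `μ ≥ 0`. -/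
theorem sector_resolvent_bound (α θ : ℝ) (h0 : 0 < α) (h2 : α < 2)
    (hθ1 : Real.pi / 2 < θ) (hθ2 : θ < min Real.pi (Real.pi / α)) :
    ∃ c : ℝ, 0 < c ∧ ∀ z : ℂ, z ≠ 0 → |Complex.arg z| ≤ θ → ∀ μ : ℝ, 0 ≤ μ →
      c * (‖z‖ ^ α + μ) ≤ ‖z ^ (α : ℂ) + (μ : ℂ)‖ ∧
      ‖z ^ (α : ℂ) + (μ : ℂ)‖⁻¹ ≤ (1 / c) * ‖z‖ ^ (-α) :=
  sector_resolvent_bound_general α θ h0 hθ1 hθ2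
end
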